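/- arXiv:2310.12993 — 11 statements merged into one kernel-verified Lean document; each statement's English description precedes it below -/
import Mathlib

section
/- For every real number x in the interval [0, 1/2], the inequality (1 + 4x²)·cos(πx) ≥ 1 − 4x² holds, with equality if and only if x = 0 or x = 1/2. -/
/-! Writing `t = 2x`, the left-hand side is `cos (2 arctan t) = (1 - t²) / (1 + t²)` and the claim
becomes `cos (π t / 2) > cos (2 arctan t)` for `0 < t < 1`, i.e. `arctan t > π t / 4`: the chord
of the strictly concave function `arctan` from `(0, 0)` to `(1, π / 4)` lies strictly below it. -/

open Real Set

namespace Real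

theorem strictConcaveOn_arctan : StrictConcaveOn ℝ (Ici 0) arctan := by
  refine strictConcaveOn_of_deriv2_neg (convex_Ici 0) continuous_arctan.continuousOn ?_
  intro x hx
  rw [interior_Ici] at hx
  have hderiv : HasDerivAt (fun y : ℝ => 1 / (1 + y ^ 2)) (-(2 * x) / (1 + x ^ 2) ^ 2) x := by
    simpa [one_div, Pi.inv_def] using
      ((hasDerivAt_pow 2 x).const_add 1).inv (by positivity : 1 + x ^ 2 ≠ 0)
  rw [Function.iterate_succ_apply, Function.iterate_one, deriv_arctan, hderiv.deriv]
  exact div_neg_of_neg_of_pos (by linarith [mem_Ioi.mp hx]) (by positivity)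

theorem pi_div_four_mul_lt_arctan {t : ℝ} (ht₀ : 0 < t) (ht₁ : t < 1) : π / 4 * t < arctan t := by
  have hchord := strictConcaveOn_arctan.2 self_mem_Ici (zero_le_one' ℝ) zero_ne_one
    (by linarith : 0 < 1 - t) ht₀ (by ring)
  simp only [smul_eq_mul, mul_zero, mul_one, zero_add, arctan_zero, arctan_one] at hchord
  linarith

theorem cos_two_mul_arctan (t : ℝ) : cos (2 * arctan t) = (1 - t ^ 2) / (1 + t ^ 2) := by
  rw [cos_two_mul, cos_sq_arctan]
  field_simp
  ring

theorem one_sub_sq_div_one_add_sq_lt_cos {t : ℝ} (ht₀ : 0 < t) (ht₁ : t < 1) :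
    (1 - t ^ 2) / (1 + t ^ 2) < cos (π / 2 * t) := by
  rw [← cos_two_mul_arctan]
  refine cos_lt_cos_of_nonneg_of_le_pi (by positivity) ?_ ?_
  · linarith [arctan_lt_pi_div_two t]
  · linarith [pi_div_four_mul_lt_arctan ht₀ ht₁]

end Real

theorem redheffer_strict {x : ℝ} (hx₀ : 0 < x) (hx₁ : x < 1 / 2) :
    1 - 4 * x ^ 2 < (1 + 4 * x ^ 2) * cos (π * x) := by
  have h := one_sub_sq_div_one_add_sq_lt_cos (t := 2 * x) (by linarith) (by linarith)
  rw [div_lt_iff₀ (by positivity), show π / 2 * (2 * x) = π * x by ring] at h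
  linarith

theorem redheffer_classical :
    ∀ x ∈ Set.Icc (0:ℝ) (1/2),
      (1 + 4*x^2) * Real.cos (π * x) ≥ 1 - 4*x^2 ∧
      ((1 + 4*x^2) * Real.cos (π * x) = 1 - 4*x^2 ↔ x = 0 ∨ x = 1/2) := by
  rintro x ⟨hx₀, hx₁⟩
  have hendpoints : x = 0 ∨ x = 1 / 2 → (1 + 4*x^2) * cos (π * x) = 1 - 4*x^2 := by
    rintro (rfl | rfl)
    · simp
    · rw [mul_one_div, cos_pi_div_two]; norm_num
  by_cases hx : x = 0 ∨ x = 1 / 2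
  · exact ⟨(hendpoints hx).ge, iff_of_true (hendpoints hx) hx⟩
  · rw [not_or] at hx
    have hlt := redheffer_strict (hx₀.lt_of_ne' hx.1) (hx₁.lt_of_ne hx.2)
    exact ⟨hlt.le, iff_of_false hlt.ne' (by tauto)⟩
end

section
/- For every real number β in the interval [0, π/2], the inequality cos((π/2)·tan(β/2)) ≥ cos(β) holds, with equality if and only if β = 0 or β = π/2. -/
open Real

/-!
On `[0, π/2)` the derivative `1 / cos² x` of `tan` is strictly increasing, so `tan` is strictly
convex there and lies strictly below its chord from `(0, 0)` to `(π/4, 1)`: `tan x < 4x/π` for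
`0 < x < π/4`. With `x = β/2` this says `(π/2) tan (β/2) < β` for `0 < β < π/2`, and both sides lie
in `[0, π/2]`, where `cos` is strictly decreasing. At `β = 0` and `β = π/2` the two arguments agree.
-/

lemma strictMonoOn_deriv_tan : StrictMonoOn (deriv tan) (Set.Ioo 0 (π / 2)) := by
  intro x hx y hy hxy
  have hcos_y : 0 < cos y := cos_pos_of_mem_Ioo ⟨by linarith [hy.1, pi_pos], hy.2⟩
  have hcos_lt : cos y < cos x :=
    strictAntiOn_cos ⟨hx.1.le, by linarith [hx.2, pi_pos]⟩ ⟨hy.1.le, by linarith [hy.2, pi_pos]⟩ hxy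
  rw [deriv_tan, deriv_tan]
  exact one_div_lt_one_div_of_lt (by positivity) (by gcongr)

lemma strictConvexOn_tan : StrictConvexOn ℝ (Set.Ico 0 (π / 2)) tan := by
  refine StrictMonoOn.strictConvexOn_of_deriv (convex_Ico _ _) ?_ ?_
  · refine continuousOn_tan.mono fun x hx => (cos_pos_of_mem_Ioo ⟨?_, hx.2⟩).ne'
    linarith [hx.1, pi_pos]
  · simpa only [interior_Ico] using strictMonoOn_deriv_tan

lemma tan_lt_four_div_pi_mul {x : ℝ} (hx₀ : 0 < x) (hx : x < π / 4) : tan x < 4 / π * x := by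
  have hπ := pi_pos
  have hslope : 4 / π * x < 1 := by
    rw [div_mul_eq_mul_div, div_lt_one hπ]; linarith
  have hconv : tan ((1 - 4 / π * x) • 0 + (4 / π * x) • (π / 4))
      < (1 - 4 / π * x) • tan 0 + (4 / π * x) • tan (π / 4) :=
    strictConvexOn_tan.2 ⟨le_rfl, by positivity⟩ ⟨by positivity, by linarith⟩ (by positivity)
      (by linarith) (by positivity) (by ring)
  have hx_eq : (1 - 4 / π * x) • (0 : ℝ) + (4 / π * x) • (π / 4) = x := by
    simp only [smul_eq_mul, mul_zero, zero_add]; field_simp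
  rwa [hx_eq, tan_zero, tan_pi_div_four, smul_zero, zero_add, smul_eq_mul, mul_one] at hconv

lemma pi_div_two_mul_tan_half_lt {β : ℝ} (hβ₀ : 0 < β) (hβ : β < π / 2) :
    π / 2 * tan (β / 2) < β := by
  have hπ := pi_pos
  calc π / 2 * tan (β / 2) < π / 2 * (4 / π * (β / 2)) := by
        gcongr; exact tan_lt_four_div_pi_mul (by linarith) (by linarith)
    _ = β := by field_simp; ring

theorem cos_tan_half_ge_cos :
    ∀ β ∈ Set.Icc (0:ℝ) (π/2),
      Real.cos (π/2 * Real.tan (β/2)) ≥ Real.cos β ∧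
      (Real.cos (π/2 * Real.tan (β/2)) = Real.cos β ↔ β = 0 ∨ β = π/2) := by
  rintro β ⟨hβ₀, hβ⟩
  rcases hβ₀.eq_or_lt with rfl | hβ₀
  · simp
  rcases hβ.eq_or_lt with rfl | hβ
  · simp [show π / 2 / 2 = π / 4 by ring]
  have hπ := pi_pos
  have hlt : cos β < cos (π / 2 * tan (β / 2)) := by
    have htan : 0 ≤ tan (β / 2) := tan_nonneg_of_nonneg_of_le_pi_div_two (by linarith) (by linarith)
    have harg := pi_div_two_mul_tan_half_lt hβ₀ hβ
    exact strictAntiOn_cos ⟨by positivity, by linarith⟩ ⟨hβ₀.le, by linarith⟩ harg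
  refine ⟨hlt.le, iff_of_false hlt.ne' ?_⟩
  rintro (rfl | rfl) <;> linarith
end

section
/- For every integer m ≥ 2 and every real number y ∈ [0, 1], the inequality (1 − y/(2m+1)²)·(1 + y/(4m−2)) ≥ 1 + y/(4m+2) holds. -/
/-!
With `a = 1/(4x-2)`, `b = 1/(4x+2)` and `c = 1/(2x+1)²` one has `a - b = 1/((2x-1)(2x+1))`, so
`a - b - c = 2/((2x-1)(2x+1)²) = 4ac`. Hence `(1 - cy)(1 + ay) - (1 + by) = y((a - b - c) - acy)`
equals `y(4 - y)/(2(2x-1)(2x+1)²)`, which is nonnegative for `x > 1/2` and `0 ≤ y ≤ 4`.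
-/

theorem redheffer_step_sub_eq (x y : ℝ) (hx₁ : 2 * x - 1 ≠ 0) (hx₂ : 2 * x + 1 ≠ 0) :
    (1 - y / (2 * x + 1) ^ 2) * (1 + y / (4 * x - 2)) - (1 + y / (4 * x + 2)) =
      y * (4 - y) / (2 * (2 * x - 1) * (2 * x + 1) ^ 2) := by
  have h₁ : 4 * x - 2 = 2 * (2 * x - 1) := by ring
  have h₂ : 4 * x + 2 = 2 * (2 * x + 1) := by ring
  rw [h₁, h₂]
  field_simp
  ring

theorem redheffer_step_le (x y : ℝ) (hx : 1 / 2 < x) (hy₀ : 0 ≤ y) (hy₄ : y ≤ 4) :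
    1 + y / (4 * x + 2) ≤ (1 - y / (2 * x + 1) ^ 2) * (1 + y / (4 * x - 2)) := by
  have hx₁ : 0 < 2 * x - 1 := by linarith
  have hx₂ : 0 < 2 * x + 1 := by linarith
  rw [← sub_nonneg, redheffer_step_sub_eq x y hx₁.ne' hx₂.ne']
  have : 0 ≤ 4 - y := by linarith
  positivity

theorem induction_step_ineq (m : ℕ) (hm : 2 ≤ m) :
    ∀ y ∈ Set.Icc (0:ℝ) 1,
      (1 - y/(2*(m:ℝ)+1)^2) * (1 + y/(4*(m:ℝ)-2)) ≥ 1 + y/(4*(m:ℝ)+2) := by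
  rintro y ⟨hy₀, hy₁⟩
  have hm' : (2 : ℝ) ≤ m := by exact_mod_cast hm
  exact redheffer_step_le m y (by linarith) hy₀ (by linarith)
end

section
/- Let α > 0 and let k ≥ 2 be an integer. If G_{k,α}(y) ≥ 0 for all y ∈ [0, 1], then for every integer n ≥ k, G_{n,α}(y) ≥ 0 for all y ∈ [0, 1]. -/
open Real

noncomputable def F (n : ℕ) (y : ℝ) : ℝ :=
  ∏ k ∈ Finset.Icc 2 n, (1 - y/(2*(k:ℝ)-1)^2)

noncomputable def G (n : ℕ) (α y : ℝ) : ℝ :=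
  (1 + y) ^ (1/α) * F n y - (1 + y/(4*(n:ℝ)-2))

/-! If `(1+y)^(1/α) F_n(y) ≥ 1 + y/(4n-2)`, multiplying by the next factor `1 - y/(2n+1)²`
(nonnegative for `y ≤ 4`) gives `(1+y)^(1/α) F_{n+1}(y) ≥ (1 + y/(4n-2))(1 - y/(2n+1)²)`, and the
right side exceeds `1 + y/(4n+2)` by `y(4-y) / (2(2n-1)(2n+1)²) ≥ 0`. Induct on `n`. -/

lemma one_add_div_le_mul_one_sub_div (c y : ℝ) (hc : 1/2 < c) (hy0 : 0 ≤ y) (hy4 : y ≤ 4) :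
    1 + y/(4*(c+1)-2) ≤ (1 + y/(4*c-2)) * (1 - y/(2*(c+1)-1)^2) := by
  have hc₁ : 0 < 2*c - 1 := by linarith
  have hc₂ : 0 < 2*c + 1 := by linarith
  have hdiff : (1 + y/(4*c-2)) * (1 - y/(2*(c+1)-1)^2) - (1 + y/(4*(c+1)-2)) =
      y*(4-y) / (2*(2*c-1)*(2*c+1)^2) := by
    rw [show 4*c-2 = 2*(2*c-1) by ring, show 2*(c+1)-1 = 2*c+1 by ring,
      show 4*(c+1)-2 = 2*(2*c+1) by ring]
    field_simp
    ring
  have hpos : 0 ≤ y*(4-y) / (2*(2*c-1)*(2*c+1)^2) :=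
    div_nonneg (mul_nonneg hy0 (by linarith)) (by positivity)
  linarith

lemma F_succ (n : ℕ) (hn : 1 ≤ n) (y : ℝ) :
    F (n+1) y = F n y * (1 - y/(2*((n:ℝ)+1)-1)^2) := by
  rw [F, F, Finset.prod_Icc_succ_top (by omega : 2 ≤ n+1)]
  push_cast
  rfl

lemma one_sub_div_sq_nonneg (n : ℕ) (hn : 1 ≤ n) (y : ℝ) (hy4 : y ≤ 4) :
    0 ≤ 1 - y/(2*((n:ℝ)+1)-1)^2 := by
  have hn' : (1:ℝ) ≤ n := by exact_mod_cast hn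
  have hsq : 4 ≤ (2*((n:ℝ)+1)-1)^2 := by nlinarith
  rw [sub_nonneg, div_le_one (by linarith)]
  linarith

lemma G_succ_nonneg (n : ℕ) (hn : 1 ≤ n) (α y : ℝ) (hy0 : 0 ≤ y) (hy4 : y ≤ 4)
    (hG : 0 ≤ G n α y) : 0 ≤ G (n+1) α y := by
  have hn' : (1:ℝ) ≤ n := by exact_mod_cast hn
  have hstep := one_add_div_le_mul_one_sub_div n y (by linarith) hy0 hy4
  rw [G, sub_nonneg] at hG
  have hmul := mul_le_mul_of_nonneg_right hG (one_sub_div_sq_nonneg n hn y hy4)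
  rw [G, F_succ n hn, ← mul_assoc]
  push_cast
  linarith

theorem G_nonneg_propagates_general (α : ℝ) (k : ℕ) (hk : 2 ≤ k)
    (h : ∀ y ∈ Set.Icc (0:ℝ) 1, 0 ≤ G k α y) :
    ∀ n : ℕ, k ≤ n → ∀ y ∈ Set.Icc (0:ℝ) 1, 0 ≤ G n α y := by
  intro n hn
  induction n, hn using Nat.le_induction with
  | base => exact h
  | succ n hkn ih =>
    intro y hy
    exact G_succ_nonneg n (by omega) α y hy.1 (by linarith [hy.2]) (ih y hy)

theorem G_nonneg_propagates (α : ℝ) (hα : 0 < α) (k : ℕ) (hk : 2 ≤ k)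
    (h : ∀ y ∈ Set.Icc (0:ℝ) 1, 0 ≤ G k α y) :
    ∀ n : ℕ, k ≤ n → ∀ y ∈ Set.Icc (0:ℝ) 1, 0 ≤ G n α y :=
  G_nonneg_propagates_general α k hk h
end

section
/- Let α > 0 and let n ≥ 2 be an integer. If G_{n,α}(y) ≥ 0 for all y ∈ [0, 1], then α ≤ log 2 / (log(1 + 1/(4n−2)) − log F_n(1)). -/
open Real

/-!
Only the endpoint `y = 1` matters: there the hypothesis reads
`1 + 1/(4n-2) ≤ 2^(1/α) F_n(1)`, and taking logarithms gives the bound on `α`.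
-/

lemma nine_le_sq_two_mul_sub_one {k : ℕ} (hk : 2 ≤ k) : (9:ℝ) ≤ (2*(k:ℝ)-1)^2 := by
  have hk' : (2:ℝ) ≤ k := by exact_mod_cast hk
  nlinarith

lemma F_pos (n : ℕ) {y : ℝ} (hy : y < 9) : 0 < F n y := by
  refine Finset.prod_pos fun k hk => ?_
  have h9 := nine_le_sq_two_mul_sub_one (Finset.mem_Icc.mp hk).1
  rw [sub_pos, div_lt_one (by linarith)]
  linarith

lemma F_le_one (n : ℕ) {y : ℝ} (hy : 0 ≤ y) (hy9 : y ≤ 9) : F n y ≤ 1 := by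
  refine Finset.prod_le_one (fun k hk => ?_) fun k _ => ?_
  · have h9 := nine_le_sq_two_mul_sub_one (Finset.mem_Icc.mp hk).1
    rw [sub_nonneg, div_le_one (by linarith)]
    linarith
  · have : 0 ≤ y/(2*(k:ℝ)-1)^2 := by positivity
    linarith

lemma le_log_div_of_le_rpow_mul {α b c f : ℝ} (hα : 0 < α) (hb : 0 < b) (hf : 0 < f)
    (hfc : f < c) (h : c ≤ b ^ (1/α) * f) : α ≤ log b / (log c - log f) := by
  have hlog : log c ≤ (1/α) * log b + log f := by
    have := log_le_log (by linarith) h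
    rwa [log_mul (by positivity) hf.ne', log_rpow hb] at this
  have hD : 0 < log c - log f := sub_pos.mpr (log_lt_log hf hfc)
  rw [le_div_iff₀ hD]
  calc α * (log c - log f) ≤ α * ((1/α) * log b) := by gcongr; linarith
    _ = log b := by field_simp

theorem threshold_upper_bound (α : ℝ) (hα : 0 < α) (n : ℕ) (hn : 2 ≤ n)
    (h : ∀ y ∈ Set.Icc (0:ℝ) 1, 0 ≤ G n α y) :
    α ≤ Real.log 2 / (Real.log (1 + 1/(4*(n:ℝ)-2)) - Real.log (F n 1)) := by
  have hG := h 1 ⟨zero_le_one, le_rfl⟩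
  rw [G, one_add_one_eq_two, sub_nonneg] at hG
  have hn' : (0:ℝ) < 4*(n:ℝ)-2 := by
    have : (2:ℝ) ≤ n := by exact_mod_cast hn
    linarith
  have hF1 : F n 1 < 1 + 1/(4*(n:ℝ)-2) := by
    have := F_le_one n zero_le_one (by norm_num)
    have : (0:ℝ) < 1/(4*(n:ℝ)-2) := by positivity
    linarith
  exact le_log_div_of_le_rpow_mul hα two_pos (F_pos n (by norm_num)) hF1 hG
end

section
/- For every real number α with 0 < α ≤ log 2 / log(21/16), the inequality (1 + y)^{1/α}·(1 − y/9) ≥ 1 + y/6 holds for all y ∈ [0, 1]. -/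
/-!
With `b = logb 2 (21/16)` we have `b ≤ 1/α`, so `(1 + y)^(1/α) ≥ (1 + y)^b`. As `t ↦ t^b` is
concave, `(1 + y)^b` lies above its chord on `[1, 2]`, whose slope is `2^b - 1 = 5/16`. The claim
then reduces to `(1 + 5y/16)(1 - y/9) - (1 + y/6) = 5y(1 - y)/144 ≥ 0`.
-/

open Real Set

lemma one_add_two_rpow_sub_one_mul_le_rpow {p y : ℝ} (hp₀ : 0 ≤ p) (hp₁ : p ≤ 1)
    (hy₀ : 0 ≤ y) (hy₁ : y ≤ 1) : 1 + (2 ^ p - 1) * y ≤ (1 + y) ^ p := by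
  have hchord := (concaveOn_rpow hp₀ hp₁).2 (mem_Ici.2 zero_le_one) (mem_Ici.2 zero_le_two)
    (sub_nonneg.2 hy₁) hy₀ (sub_add_cancel 1 y)
  simp only [smul_eq_mul, one_rpow, mul_one] at hchord
  rw [show 1 - y + y * 2 = 1 + y by ring] at hchord
  linarith

theorem G_two_nonneg (α : ℝ) (h1 : 0 < α) (h2 : α ≤ Real.log 2 / Real.log (21/16)) :
    ∀ y ∈ Set.Icc (0:ℝ) 1, (1 + y) ^ (1/α) * (1 - y/9) ≥ 1 + y/6 := by
  rintro y ⟨hy₀, hy₁⟩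
  set b := logb 2 (21 / 16) with hb
  have hb_pos : 0 < b := logb_pos one_lt_two (by norm_num)
  have hb_le_one : b ≤ 1 := by
    rw [hb, ← logb_self_eq_one one_lt_two]
    exact (logb_le_logb one_lt_two (by norm_num) two_pos).2 (by norm_num)
  have hb_le : b ≤ 1 / α := by
    rwa [le_one_div hb_pos h1, hb, Real.logb, one_div_div]
  have hchord : 1 + 5 / 16 * y ≤ (1 + y) ^ b := by
    have h := one_add_two_rpow_sub_one_mul_le_rpow hb_pos.le hb_le_one hy₀ hy₁
    rw [rpow_logb two_pos (by norm_num) (by norm_num)] at h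
    linarith
  have hmono : (1 + y) ^ b ≤ (1 + y) ^ (1 / α) :=
    rpow_le_rpow_of_exponent_le (by linarith) hb_le
  have hfactor : 0 ≤ 1 - y / 9 := by linarith
  nlinarith [mul_le_mul_of_nonneg_right (hchord.trans hmono) hfactor,
    mul_nonneg hy₀ (sub_nonneg.2 hy₁)]
end

section
/- The sequence (F_n(1))_{n ≥ 2} converges to π/4 as n → ∞; that is, lim_{n→∞} ∏_{k=2}^{n} (1 − 1/(2k−1)²) = π/4. -/
open Real Filter

/- Since `1 - 1/(2k-1)² = (2k-2)·2k/(2k-1)²`, the partial products telescope against Wallis'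
products `W m → π/2`, leaving the factor `(m+1)/(2m+1) → 1/2`. -/

open Real.Wallis in
theorem prod_Icc_one_sub_one_div_odd_sq_eq_W_mul (m : ℕ) :
    ∏ k ∈ Finset.Icc 2 (m + 1), (1 - 1 / (2 * (k : ℝ) - 1) ^ 2) =
      W m * ((m + 1) / (2 * m + 1)) := by
  induction m with
  | zero => simp [W]
  | succ m ih =>
    rw [Finset.prod_Icc_succ_top (by omega), ih, W_succ]
    have hodd : 2 * ((m + 1 + 1 : ℕ) : ℝ) - 1 = 2 * m + 3 := by push_cast; ring
    rw [hodd]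
    push_cast
    field_simp
    ring

theorem F_one_tendsto_pi_div_four :
    Filter.Tendsto (fun n : ℕ => ∏ k ∈ Finset.Icc 2 n, (1 - 1/(2*(k:ℝ)-1)^2))
      Filter.atTop (nhds (π/4)) := by
  refine (tendsto_add_atTop_iff_nat 1).1 ?_
  simp_rw [prod_Icc_one_sub_one_div_odd_sq_eq_W_mul]
  have hratio : Tendsto (fun m : ℕ => ((m : ℝ) + 1) / (2 * m + 1)) atTop (nhds (1 / 2)) := by
    simpa [add_comm] using tendsto_add_mul_div_add_mul_atTop_nhds (1 : ℝ) 1 1 two_ne_zero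
  convert Wallis.tendsto_W_nhds_pi_div_two.mul hratio using 2
  ring
end

section
/- For every real number α with 0 < α ≤ log 2 / log(4/π) and every real number x ∈ [0, 1/2], the inequality (1 + 4x²)^{1/α}·cos(πx) ≥ 1 − 4x² holds. -/
/-!
Write `u = 4x²` and `β = log(4/π) / log 2 = 1/α_T`, so that `2^β = 4/π` and `β ≤ 1/α`.
The heart of the matter is the rational bound `1 - u ≤ (1 + (4/π - 1) u) cos(πx)` on `[0, 1/2]`,
which is tight to first order at both ends. Concavity of `u ↦ (1 + u)^β` puts the chord
`1 + (4/π - 1) u` below `(1 + u)^β` on `[0, 1]`, and `(1 + u)^β ≤ (1 + u)^(1/α)` since `1 + u ≥ 1`.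
The rational bound itself is checked with polynomial Taylor bounds: for `cos(πx)` when
`x ≤ 3/10`, and for `sin(π(1/2 - x))` when `x ≥ 3/10`.
-/

open Real

/-- The remainder `z⁵/100` of `Real.sin_bound`, used at the half angle, gives `y⁶/600` in place of
Taylor's `y⁶/720`. -/
theorem Real.one_sub_sq_div_two_add_pow_four_div_24_sub_pow_six_div_600_le_cos {y : ℝ}
    (hy : |y| ≤ 2) : 1 - y ^ 2 / 2 + y ^ 4 / 24 - y ^ 6 / 600 ≤ cos y := by
  set z := |y| / 2 with hz
  have hz0 : 0 ≤ z := by positivity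
  have hz1 : z ≤ 1 := by linarith
  have hsin_nonneg : 0 ≤ sin z := sin_nonneg_of_nonneg_of_le_pi hz0 (by linarith [pi_gt_three])
  have hsin_le : sin z ≤ z - z ^ 3 / 6 + z ^ 5 / 100 := by
    have := (abs_sub_le_iff.1 (sin_bound (abs_le.2 ⟨by linarith, hz1⟩))).1
    rw [abs_of_nonneg hz0] at this
    linarith
  have hcos : cos y = 1 - 2 * sin z ^ 2 := by
    rw [← cos_abs, show |y| = 2 * z by rw [hz]; ring, cos_two_mul, cos_sq']
    ring
  have hy2 : y ^ 2 = (2 * z) ^ 2 := by rw [hz, mul_div_cancel₀ _ two_ne_zero, sq_abs]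
  have hpow (n : ℕ) : y ^ (2 * n) = (2 * z) ^ (2 * n) := by rw [pow_mul, pow_mul, hy2]
  rw [hcos, hpow 2, hpow 3, hy2]
  have hsq : sin z ^ 2 ≤ (z - z ^ 3 / 6 + z ^ 5 / 100) ^ 2 :=
    pow_le_pow_left₀ hsin_nonneg hsin_le 2
  nlinarith [pow_nonneg hz0 6, pow_nonneg hz0 8,
    mul_le_mul_of_nonneg_left (pow_le_one₀ hz0 hz1 (n := 4)) (pow_nonneg hz0 6)]

theorem one_add_two_rpow_sub_one_mul_le_one_add_rpow {p u : ℝ} (hp₀ : 0 ≤ p) (hp₁ : p ≤ 1)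
    (hu₀ : 0 ≤ u) (hu₁ : u ≤ 1) : 1 + (2 ^ p - 1) * u ≤ (1 + u) ^ p := by
  have h := (concaveOn_rpow hp₀ hp₁).2 (Set.mem_Ici.2 zero_le_one)
    (Set.mem_Ici.2 zero_le_two) (sub_nonneg.2 hu₁) hu₀ (sub_add_cancel 1 u)
  simp only [smul_eq_mul, one_rpow] at h
  calc 1 + (2 ^ p - 1) * u = (1 - u) * 1 + u * 2 ^ p := by ring
    _ ≤ ((1 - u) * 1 + u * 2) ^ p := h
    _ = (1 + u) ^ p := by ring_nf

theorem redheffer_core_near_zero {x : ℝ} (hx₀ : 0 ≤ x) (hx : x ≤ 3 / 10) :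
    π * (1 - 4 * x ^ 2) ≤ (π + (4 - π) * (4 * x ^ 2)) * cos (π * x) := by
  have hπl : 3.1415 < π := pi_gt_d4
  have hπu : π < 3.1416 := pi_lt_d4
  have hcos := one_sub_sq_div_two_add_pow_four_div_24_sub_pow_six_div_600_le_cos
    (y := π * x) (by rw [abs_of_nonneg (by positivity)]; nlinarith)
  set u := x ^ 2
  have hu₀ : 0 ≤ u := sq_nonneg x
  have hu₁ : u ≤ 9 / 100 := by nlinarith
  have hy : ∀ n : ℕ, (π * x) ^ (2 * n) = (π ^ 2 * u) ^ n := fun n => by rw [pow_mul, mul_pow]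
  rw [hy 1, hy 2, hy 3, pow_one] at hcos
  have hexpand : (π + (4 - π) * (4 * u)) *
        (1 - π ^ 2 * u / 2 + (π ^ 2 * u) ^ 2 / 24 - (π ^ 2 * u) ^ 3 / 600) - π * (1 - 4 * u) =
      u * ((16 - π ^ 3 / 2) + (π ^ 5 / 24 - 2 * (4 - π) * π ^ 2) * u +
        ((4 - π) * π ^ 4 / 6 - π ^ 7 / 600) * u ^ 2 - (4 - π) * π ^ 6 / 150 * u ^ 3) := by
    ring
  have a₀ : 0.49 ≤ 16 - π ^ 3 / 2 := by nlinarith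
  have a₁ : -4.2 ≤ π ^ 5 / 24 - 2 * (4 - π) * π ^ 2 := by nlinarith
  have a₂ : 0 ≤ (4 - π) * π ^ 4 / 6 - π ^ 7 / 600 := by nlinarith
  have a₃ : (4 - π) * π ^ 6 / 150 ≤ 5.6 := by nlinarith
  have hu₃ : u ^ 3 ≤ 0.001 := by nlinarith [pow_le_pow_left₀ hu₀ hu₁ 3]
  have hcubic : 0 ≤ (16 - π ^ 3 / 2) + (π ^ 5 / 24 - 2 * (4 - π) * π ^ 2) * u +
      ((4 - π) * π ^ 4 / 6 - π ^ 7 / 600) * u ^ 2 - (4 - π) * π ^ 6 / 150 * u ^ 3 := by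
    nlinarith [mul_le_mul_of_nonneg_right a₁ hu₀, mul_nonneg a₂ (sq_nonneg u),
      mul_le_mul_of_nonneg_right a₃ (pow_nonneg hu₀ 3)]
  have hweight : 0 ≤ π + (4 - π) * (4 * u) := by nlinarith
  nlinarith [mul_nonneg hu₀ hcubic, mul_le_mul_of_nonneg_left hcos hweight]

theorem redheffer_core_near_half {x : ℝ} (hx : 3 / 10 ≤ x) (hx₁ : x ≤ 1 / 2) :
    π * (1 - 4 * x ^ 2) ≤ (π + (4 - π) * (4 * x ^ 2)) * cos (π * x) := by
  have hπl : 3.1415 < π := pi_gt_d4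
  have hπu : π < 3.1416 := pi_lt_d4
  set t := 1 / 2 - x with ht
  have ht₀ : 0 ≤ t := by linarith
  have ht₁ : t ≤ 1 / 5 := by linarith
  have hx_eq : x = 1 / 2 - t := by ring
  have hcos : cos (π * x) = sin (π * t) := by
    rw [hx_eq, mul_sub, mul_one_div, cos_pi_div_two_sub]
  have hsin := sin_ge_sub_cube (mul_nonneg pi_pos.le ht₀)
  rw [hcos, hx_eq]
  have hexpand : (π + (4 - π) * (4 * (1 / 2 - t) ^ 2)) * (π * t - (π * t) ^ 3 / 6) -
        π * (1 - 4 * (1 / 2 - t) ^ 2) =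
      π * t ^ 2 * (4 * (π - 3) + (4 * (4 - π) - 2 * π ^ 2 / 3) * t +
        2 * π ^ 2 / 3 * (4 - π) * (t ^ 2 * (1 - t))) := by
    ring
  have b₀ : 0.566 ≤ 4 * (π - 3) := by linarith
  have b₁ : -3.15 ≤ 4 * (4 - π) - 2 * π ^ 2 / 3 := by nlinarith
  have b₂ : 5.6 ≤ 2 * π ^ 2 / 3 * (4 - π) := by nlinarith
  have hcubic : 0 ≤ 4 * (π - 3) + (4 * (4 - π) - 2 * π ^ 2 / 3) * t +
      2 * π ^ 2 / 3 * (4 - π) * (t ^ 2 * (1 - t)) := by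
    have hcub : 0.8 * t ^ 2 ≤ t ^ 2 * (1 - t) := by nlinarith [sq_nonneg t]
    nlinarith [mul_le_mul_of_nonneg_right b₁ ht₀, sq_nonneg (t - 0.35),
      mul_le_mul b₂ hcub (by positivity) (by linarith)]
  have hweight : 0 ≤ π + (4 - π) * (4 * (1 / 2 - t) ^ 2) := by nlinarith [sq_nonneg (1 / 2 - t)]
  nlinarith [mul_nonneg (mul_nonneg pi_pos.le (sq_nonneg t)) hcubic,
    mul_le_mul_of_nonneg_left hsin hweight]

theorem one_sub_four_mul_sq_le_mul_cos_pi_mul {x : ℝ} (hx₀ : 0 ≤ x) (hx₁ : x ≤ 1 / 2) :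
    1 - 4 * x ^ 2 ≤ (1 + (4 / π - 1) * (4 * x ^ 2)) * cos (π * x) := by
  have hcore : π * (1 - 4 * x ^ 2) ≤ (π + (4 - π) * (4 * x ^ 2)) * cos (π * x) := by
    rcases le_total x (3 / 10) with hx | hx
    · exact redheffer_core_near_zero hx₀ hx
    · exact redheffer_core_near_half hx hx₁
  have hweight : 1 + (4 / π - 1) * (4 * x ^ 2) = (π + (4 - π) * (4 * x ^ 2)) / π := by
    field_simp
  rw [hweight, div_mul_eq_mul_div, le_div_iff₀ pi_pos]
  linarith

theorem generalized_redheffer_sufficiency (α : ℝ) (h1 : 0 < α)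
    (h2 : α ≤ Real.log 2 / Real.log (4/π)) :
    ∀ x ∈ Set.Icc (0:ℝ) (1/2),
      (1 + 4*x^2) ^ (1/α) * Real.cos (π * x) ≥ 1 - 4*x^2 := by
  rintro x ⟨hx₀, hx₁⟩
  have h4π : 1 < 4 / π := by rw [lt_div_iff₀ pi_pos]; linarith [pi_lt_four]
  have hβ₀ : 0 ≤ logb 2 (4 / π) := logb_nonneg one_lt_two h4π.le
  have hβ₁ : logb 2 (4 / π) ≤ 1 := by
    rw [← logb_self_eq_one one_lt_two]
    exact logb_le_logb_of_le one_lt_two (by positivity)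
      (by rw [div_le_iff₀ pi_pos]; linarith [pi_gt_three])
  have hβα : logb 2 (4 / π) ≤ 1 / α := by
    simpa only [logb, one_div_div] using one_div_le_one_div_of_le h1 h2
  have hcos : 0 ≤ cos (π * x) :=
    cos_nonneg_of_mem_Icc ⟨by nlinarith [pi_pos], by nlinarith [pi_pos]⟩
  have hchord := one_add_two_rpow_sub_one_mul_le_one_add_rpow hβ₀ hβ₁
    (by positivity : 0 ≤ 4 * x ^ 2) (by nlinarith)
  rw [rpow_logb two_pos (by norm_num) (by positivity)] at hchord
  calc 1 - 4 * x ^ 2 ≤ (1 + (4 / π - 1) * (4 * x ^ 2)) * cos (π * x) :=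
        one_sub_four_mul_sq_le_mul_cos_pi_mul hx₀ hx₁
    _ ≤ (1 + 4 * x ^ 2) ^ logb 2 (4 / π) * cos (π * x) := mul_le_mul_of_nonneg_right hchord hcos
    _ ≤ (1 + 4 * x ^ 2) ^ (1 / α) * cos (π * x) := by
        gcongr
        exact le_add_of_nonneg_right (by positivity)
end

section
/- For every real number α with α > log 2 / log(4/π), there exists a real number x ∈ [0, 1/2] such that (1 + 4x²)^{1/α}·cos(πx) < 1 − 4x². -/
/-!
Put `c := 2 ^ p · π / 4` with `p = 1/α`; the hypothesis on `α` says exactly `c < 1`. At `x = c/2`,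
using `1 + 4x² ≤ 2` and `cos (πx) = sin (π(1/2 - x)) < π(1/2 - x)`, the left side is below
`2 ^ p · π (1 - c) / 2 = 2c(1 - c)`, which is at most `1 - c² = 1 - 4x²` since `(1 - c)² ≥ 0`.
-/

open Real

lemma Real.rpow_inv_lt_of_log_div_log_lt {a b α : ℝ} (ha : 1 < a) (hb : 1 < b)
    (h : log a / log b < α) : a ^ α⁻¹ < b := by
  have hlog_b : 0 < log b := log_pos hb
  have hα : 0 < α := (div_pos (log_pos ha) hlog_b).trans h
  rw [rpow_inv_lt_iff_of_pos (by linarith) (by linarith) hα,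
    lt_rpow_iff_log_lt (by linarith) (by linarith)]
  rwa [div_lt_iff₀ hlog_b] at h

lemma Real.cos_pi_mul_lt_pi_mul_half_sub {x : ℝ} (hx : x < 1 / 2) :
    cos (π * x) < π * (1 / 2 - x) := by
  have hcos : cos (π * x) = sin (π * (1 / 2 - x)) := by
    rw [← cos_pi_div_two_sub]
    ring_nf
  rw [hcos]
  exact sin_lt (mul_pos pi_pos (by linarith))

lemma exists_mul_cos_pi_mul_lt_of_two_rpow_lt {p : ℝ} (hp : 0 ≤ p) (h : (2 : ℝ) ^ p < 4 / π) :
    ∃ x ∈ Set.Icc (0 : ℝ) (1 / 2), (1 + 4 * x ^ 2) ^ p * cos (π * x) < 1 - 4 * x ^ 2 := by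
  set c : ℝ := 2 ^ p * (π / 4) with hc
  have hc_pos : 0 < c := by positivity
  have hc_lt_one : c < 1 := by
    calc c < 4 / π * (π / 4) := mul_lt_mul_of_pos_right h (by positivity)
      _ = 1 := by field_simp
  refine ⟨c / 2, ⟨by positivity, by linarith⟩, ?_⟩
  have hcos_nonneg : 0 ≤ cos (π * (c / 2)) :=
    cos_nonneg_of_neg_pi_div_two_le_of_le (by nlinarith [pi_pos]) (by nlinarith [pi_pos])
  calc (1 + 4 * (c / 2) ^ 2) ^ p * cos (π * (c / 2))
      ≤ 2 ^ p * cos (π * (c / 2)) := by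
        gcongr
        nlinarith
    _ < 2 ^ p * (π * (1 / 2 - c / 2)) := by
        gcongr
        exact cos_pi_mul_lt_pi_mul_half_sub (by linarith)
    _ = 2 * c * (1 - c) := by rw [hc]; ring
    _ ≤ 1 - 4 * (c / 2) ^ 2 := by nlinarith [sq_nonneg (1 - c)]

theorem generalized_redheffer_necessity (α : ℝ) (h : Real.log 2 / Real.log (4/π) < α) :
    ∃ x ∈ Set.Icc (0:ℝ) (1/2),
      (1 + 4*x^2) ^ (1/α) * Real.cos (π * x) < 1 - 4*x^2 := by
  have h4π : 1 < 4 / π := (one_lt_div pi_pos).2 (by linarith [pi_lt_d2])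
  have hα : 0 < α := (div_pos (log_pos one_lt_two) (log_pos h4π)).trans h
  refine exists_mul_cos_pi_mul_lt_of_two_rpow_lt (by positivity) ?_
  rw [one_div]
  exact rpow_inv_lt_of_log_div_log_lt one_lt_two h4π h
end

section
/- For every real number α with 0 < α < log 2 / log(4/π) and every real number x ∈ (0, 1/2), the strict inequality (1 + 4x²)^{1/α}·cos(πx) > 1 − 4x² holds; equality in (1 + 4x²)^{1/α}·cos(πx) ≥ 1 − 4x² over [0, 1/2] occurs exactly at x = 0 and x = 1/2. -/
open Real

/-!
The inequality is proved at the critical exponent `β = log (4/π) / log 2 = 1 / α_T`; for larger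
exponents it becomes strict because `1 + 4x² > 1` and `cos (πx) > 0`, and the equality cases
`x = 0, 1/2` are immediate.

At `β`, Taylor bounds with explicit remainders for `log`, `exp`, `cos` and `sin` reduce the
inequality to polynomial ones, on `[0, 0.22]` and on `[0.22, 1/2]` separately. Near `x = 1/2`
put `s = 1/2 - x`: then `1 + 4x² = 2(1 - y)` with `y = 2s - 2s²`, and `2 ^ β = 4/π`
turns `(1 + 4x²) ^ β cos (πx)` into `(1 - y) ^ β · (4/π) sin (πs)`, which agrees with
`1 - 4x² = 4s(1 - s)` to first order in `s`; this is why `β` is the sharp exponent.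
-/

lemma abs_sum_range_add_log_one_sub_le {x : ℝ} (hx : |x| ≤ 1 / 2) (n : ℕ) :
    |(∑ i ∈ Finset.range n, x ^ (i + 1) / (i + 1)) + log (1 - x)| ≤ 2 * |x| ^ (n + 1) := by
  refine (abs_log_sub_add_sum_range_le (by linarith) n).trans ?_
  rw [div_le_iff₀ (by linarith)]
  nlinarith [pow_nonneg (abs_nonneg x) (n + 1)]

lemma log_four_div_pi_mem_Icc : log (4 / π) ∈ Set.Icc 0.24155 0.24158 := by
  have lower := abs_sum_range_add_log_one_sub_le (x := 0.21460175) (by norm_num [abs_of_pos]) 7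
  have upper := abs_sum_range_add_log_one_sub_le (x := 0.214602) (by norm_num [abs_of_pos]) 7
  have h₁ : log (π / 4) ≤ log (1 - 0.21460175) :=
    log_le_log (by positivity) (by linarith [pi_lt_d6])
  have h₂ : log (1 - 0.214602) ≤ log (π / 4) :=
    log_le_log (by norm_num) (by linarith [pi_gt_d6])
  simp only [Finset.sum_range_succ, Finset.sum_range_zero] at lower upper
  norm_num [abs_le] at lower upper h₁ h₂
  rw [← inv_div, log_inv]
  constructor <;> linarith

/-- The reciprocal `1 / α_T` of the sharp threshold. -/
noncomputable def redhefferExponent : ℝ := log (4 / π) / log 2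

lemma redhefferExponent_mem_Icc : redhefferExponent ∈ Set.Icc 0.3484 0.3486 := by
  obtain ⟨hlo, hhi⟩ := log_four_div_pi_mem_Icc
  have hl2 := log_pos one_lt_two
  have := log_two_gt_d9
  have := log_two_lt_d9
  constructor
  · rw [redhefferExponent, le_div_iff₀ hl2]; nlinarith
  · rw [redhefferExponent, div_le_iff₀ hl2]; nlinarith

lemma two_rpow_redhefferExponent : (2 : ℝ) ^ redhefferExponent = 4 / π := by
  rw [rpow_def_of_pos two_pos, redhefferExponent, mul_div_cancel₀ _ (log_pos one_lt_two).ne',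
    exp_log (by positivity)]

lemma log_one_add_ge_quintic {t : ℝ} (h0 : 0 ≤ t) (h1 : t ≤ 1 / 2) :
    t - t ^ 2 / 2 + t ^ 3 / 3 - t ^ 4 / 4 - 2 * t ^ 5 ≤ log (1 + t) := by
  have h := abs_sum_range_add_log_one_sub_le (x := -t) (by rwa [abs_neg, abs_of_nonneg h0]) 4
  simp only [Finset.sum_range_succ, Finset.sum_range_zero, sub_neg_eq_add, abs_neg,
    abs_of_nonneg h0] at h
  have hcube : (-t) ^ 3 = -t ^ 3 := by ring
  have := (abs_le.1 h).1
  norm_num [hcube] at this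
  linarith

lemma log_one_sub_ge_neg_quadratic {y : ℝ} (h0 : 0 ≤ y) (h1 : y ≤ 0.4032) :
    -(y + 0.71 * y ^ 2) ≤ log (1 - y) := by
  have h := abs_sum_range_add_log_one_sub_le (x := y) (by rw [abs_of_nonneg h0]; linarith) 7
  simp only [Finset.sum_range_succ, Finset.sum_range_zero, abs_of_nonneg h0] at h
  have hpow : ∀ n : ℕ, y ^ (n + 2) ≤ 0.4032 ^ n * y ^ 2 := fun n => by
    rw [pow_add]; gcongr
  have := (abs_le.1 h).1
  push_cast at this
  nlinarith [hpow 1, hpow 2, hpow 3, hpow 4, hpow 5, hpow 6]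

lemma one_sub_add_sq_le_exp_neg {z : ℝ} (h0 : 0 ≤ z) (h1 : z ≤ 0.19) :
    1 - z + 0.363 * z ^ 2 ≤ exp (-z) := by
  have h := one_sub_div_pow_le_exp_neg (n := 4) (t := z) (by norm_num; linarith)
  push_cast at h
  nlinarith [pow_nonneg h0 3, pow_nonneg h0 4]

lemma one_sub_mul_sq_le_cos_pi_mul (x : ℝ) : 1 - 4.93485 * x ^ 2 ≤ cos (π * x) := by
  have hπ : π ^ 2 ≤ 9.8697 := by nlinarith [pi_lt_d6, pi_pos]
  nlinarith [one_sub_sq_div_two_le_cos (x := π * x), mul_le_mul_of_nonneg_right hπ (sq_nonneg x)]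

lemma sub_cube_le_four_div_pi_mul_sin {s : ℝ} (hs : 0 ≤ s) :
    4 * s - 6.5798 * s ^ 3 ≤ 4 / π * sin (π * s) := by
  have hπ : π ^ 2 ≤ 9.8697 := by nlinarith [pi_lt_d6, pi_pos]
  have hsin := sin_ge_sub_cube (mul_nonneg pi_pos.le hs)
  have hexpand : 4 / π * (π * s - (π * s) ^ 3 / 6) = 4 * s - 2 / 3 * π ^ 2 * s ^ 3 := by
    field_simp; ring
  calc 4 * s - 6.5798 * s ^ 3 ≤ 4 * s - 2 / 3 * π ^ 2 * s ^ 3 := by nlinarith [pow_nonneg hs 3]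
    _ = 4 / π * (π * s - (π * s) ^ 3 / 6) := hexpand.symm
    _ ≤ 4 / π * sin (π * s) := by gcongr

lemma redheffer_polynomial_bound_near_zero {t : ℝ} (h0 : 0 ≤ t) (h1 : t ≤ 0.1936) :
    1 - t ≤ (1 + 0.3484 * (t - t ^ 2 / 2 + t ^ 3 / 3 - t ^ 4 / 4 - 2 * t ^ 5) / 2) ^ 2
      * (1 - 1.2337125 * t) := by
  have hpow : ∀ n : ℕ, t ^ (n + 1) ≤ 0.1936 ^ n * t := fun n => by
    rw [pow_succ]; gcongr
  nlinarith [hpow 1, hpow 3, hpow 4, hpow 7, hpow 10, pow_nonneg h0 3, pow_nonneg h0 6,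
    pow_nonneg h0 7, pow_nonneg h0 9, pow_nonneg h0 10]

lemma redheffer_polynomial_bound_near_half {s y z : ℝ} (h0 : 0 ≤ s) (h1 : s ≤ 0.28)
    (hy : y = 2 * s - 2 * s ^ 2) (hz : z = 0.3486 * (y + 0.71 * y ^ 2)) :
    4 * s * (1 - s) ≤ (1 - z + 0.363 * z ^ 2) * (4 * s - 6.5798 * s ^ 3) := by
  subst hz hy
  have hpow : ∀ n : ℕ, s ^ (n + 2) ≤ 0.28 ^ n * s ^ 2 := fun n => by
    rw [pow_add]; gcongr
  nlinarith [hpow 1, hpow 3, hpow 4, hpow 6, hpow 7, hpow 9, pow_nonneg h0 4, pow_nonneg h0 7,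
    pow_nonneg h0 10, sq_nonneg (s * (s - 0.30353)),
    mul_nonneg (pow_nonneg h0 3) (by linarith : (0:ℝ) ≤ 0.28 - s),
    mul_nonneg h0 (by linarith : (0:ℝ) ≤ 0.28 - s)]

lemma sq_one_add_le_one_add_rpow {t B : ℝ} (h0 : 0 ≤ t) (h1 : t ≤ 1 / 2) (hB : 0.3484 ≤ B) :
    (1 + 0.3484 * (t - t ^ 2 / 2 + t ^ 3 / 3 - t ^ 4 / 4 - 2 * t ^ 5) / 2) ^ 2 ≤ (1 + t) ^ B := by
  set L := t - t ^ 2 / 2 + t ^ 3 / 3 - t ^ 4 / 4 - 2 * t ^ 5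
  have hL : L ≤ log (1 + t) := log_one_add_ge_quintic h0 h1
  have hL0 : 0 ≤ L := by
    simp only [L]; nlinarith [pow_nonneg h0 2, pow_nonneg h0 3, pow_nonneg h0 4, pow_nonneg h0 5]
  have hlog : 0 ≤ log (1 + t) := log_nonneg (by linarith)
  have hexp : 0.3484 * L ≤ log (1 + t) * B := by nlinarith
  rw [rpow_def_of_pos (by linarith)]
  calc (1 + 0.3484 * L / 2) ^ 2 ≤ exp (0.3484 * L) := by
        simpa [sub_eq_add_neg, neg_div] using
          one_sub_div_pow_le_exp_neg (n := 2) (t := -(0.3484 * L)) (by push_cast; linarith)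
    _ ≤ exp (log (1 + t) * B) := exp_le_exp.2 hexp

lemma one_sub_four_mul_sq_le_rpow_mul_cos_of_abs_le {x B : ℝ} (hx : |x| ≤ 0.22)
    (hB : 0.3484 ≤ B) :
    1 - 4 * x ^ 2 ≤ (1 + 4 * x ^ 2) ^ B * cos (π * x) := by
  have hx2 : x ^ 2 ≤ 0.0484 := by nlinarith [sq_abs x, abs_nonneg x]
  have hcos := one_sub_mul_sq_le_cos_pi_mul x
  have hrpow := sq_one_add_le_one_add_rpow (t := 4 * x ^ 2) (by positivity) (by linarith) hB
  calc 1 - 4 * x ^ 2 ≤ _ :=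
        redheffer_polynomial_bound_near_zero (t := 4 * x ^ 2) (by positivity) (by linarith)
    _ = _ * (1 - 4.93485 * x ^ 2) := by ring
    _ ≤ (1 + 4 * x ^ 2) ^ B * cos (π * x) :=
        mul_le_mul hrpow hcos (by linarith) (by positivity)

lemma one_sub_four_mul_sq_le_rpow_redhefferExponent_mul_cos_of_ge {x : ℝ} (hx : 0.22 ≤ x)
    (hx' : x ≤ 1 / 2) :
    1 - 4 * x ^ 2 ≤ (1 + 4 * x ^ 2) ^ redhefferExponent * cos (π * x) := by
  obtain ⟨hβ0, hβ1⟩ := redhefferExponent_mem_Icc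
  set β := redhefferExponent
  set s := 1 / 2 - x with hs
  set y := 2 * s - 2 * s ^ 2 with hy
  set z := 0.3486 * (y + 0.71 * y ^ 2) with hz
  have hs0 : 0 ≤ s := by linarith
  have hs1 : s ≤ 0.28 := by linarith
  have hy0 : 0 ≤ y := by nlinarith
  have hy1 : y ≤ 0.4032 := by nlinarith
  have hz0 : 0 ≤ z := by positivity
  have hz1 : z ≤ 0.19 := by nlinarith
  have hlog : -z ≤ log (1 - y) * β := by
    nlinarith [log_one_sub_ge_neg_quadratic hy0 hy1,
      log_nonpos (by linarith : 0 ≤ 1 - y) (by linarith)]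
  have hrpow : 1 - z + 0.363 * z ^ 2 ≤ (1 - y) ^ β := by
    rw [rpow_def_of_pos (by linarith)]
    exact (one_sub_add_sq_le_exp_neg hz0 hz1).trans (exp_le_exp.2 hlog)
  have hsplit : (1 + 4 * x ^ 2) ^ β = 4 / π * (1 - y) ^ β := by
    rw [show 1 + 4 * x ^ 2 = 2 * (1 - y) by ring, mul_rpow zero_le_two (by linarith),
      two_rpow_redhefferExponent]
  have hcos : cos (π * x) = sin (π * s) := by
    rw [show π * x = π / 2 - π * s by ring, cos_pi_div_two_sub]
  calc 1 - 4 * x ^ 2 = 4 * s * (1 - s) := by ring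
    _ ≤ (1 - z + 0.363 * z ^ 2) * (4 * s - 6.5798 * s ^ 3) :=
        redheffer_polynomial_bound_near_half hs0 hs1 hy hz
    _ ≤ (1 - y) ^ β * (4 / π * sin (π * s)) :=
        mul_le_mul hrpow (sub_cube_le_four_div_pi_mul_sin hs0) (by nlinarith)
          (rpow_nonneg (by linarith) _)
    _ = (1 + 4 * x ^ 2) ^ β * cos (π * x) := by rw [hsplit, hcos]; ring

lemma one_sub_four_mul_sq_le_rpow_redhefferExponent_mul_cos {x : ℝ} (hx : 0 ≤ x)
    (hx' : x ≤ 1 / 2) :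
    1 - 4 * x ^ 2 ≤ (1 + 4 * x ^ 2) ^ redhefferExponent * cos (π * x) := by
  rcases le_total x 0.22 with h | h
  · exact one_sub_four_mul_sq_le_rpow_mul_cos_of_abs_le (by rwa [abs_of_nonneg hx])
      redhefferExponent_mem_Icc.1
  · exact one_sub_four_mul_sq_le_rpow_redhefferExponent_mul_cos_of_ge h hx'

lemma one_sub_four_mul_sq_lt_rpow_mul_cos {x p : ℝ} (hx : 0 < x) (hx' : x < 1 / 2)
    (hp : redhefferExponent < p) :
    1 - 4 * x ^ 2 < (1 + 4 * x ^ 2) ^ p * cos (π * x) := by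
  have hcos : 0 < cos (π * x) :=
    cos_pos_of_mem_Ioo ⟨by nlinarith [pi_pos], by nlinarith [pi_pos]⟩
  calc 1 - 4 * x ^ 2 ≤ (1 + 4 * x ^ 2) ^ redhefferExponent * cos (π * x) :=
        one_sub_four_mul_sq_le_rpow_redhefferExponent_mul_cos hx.le hx'.le
    _ < (1 + 4 * x ^ 2) ^ p * cos (π * x) :=
        mul_lt_mul_of_pos_right (rpow_lt_rpow_of_exponent_lt (by nlinarith) hp) hcos

theorem generalized_redheffer_equality_cases (α : ℝ) (h1 : 0 < α)
    (h2 : α < Real.log 2 / Real.log (4/π)) :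
    (∀ x : ℝ, 0 < x → x < 1/2 →
      (1 + 4*x^2) ^ (1/α) * Real.cos (π * x) > 1 - 4*x^2) ∧
    (∀ x ∈ Set.Icc (0:ℝ) (1/2),
      ((1 + 4*x^2) ^ (1/α) * Real.cos (π * x) = 1 - 4*x^2 ↔ x = 0 ∨ x = 1/2)) := by
  have hp : redhefferExponent < 1 / α := by
    rw [redhefferExponent, ← one_div_div]
    exact one_div_lt_one_div_of_lt h1 h2
  have strict x (hx : 0 < x) (hx' : x < 1 / 2) := one_sub_four_mul_sq_lt_rpow_mul_cos hx hx' hp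
  refine ⟨strict, fun x ⟨hx, hx'⟩ => ⟨fun heq => ?_, ?_⟩⟩
  · by_contra! hne
    exact (strict x (hx.lt_of_ne' hne.1) (hx'.lt_of_ne hne.2)).ne' heq
  · rintro (rfl | rfl) <;> norm_num [mul_one_div]
end

section
/- For every real number θ with 0 < θ < 1, the inequality sin²(πθ)·(1/θ² + 1/(1−θ)²) ≥ 8 holds, with equality if and only if θ = 1/2. -/
/-!
With `x = θ - 1/2` one has `1/θ² + 1/(1-θ)² = 8 (1 + 4x²) / (1 - 4x²)²` and `sin (πθ) = cos (πx)`.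
Near `θ = 1/2` (`|x| ≤ 1/4`) the bound `cos (πx) ≥ 1 - π²x²/2 ≥ 1 - 5x²` already gives
`cos² (πx) (1 + 4x²) > (1 - 4x²)²` for `x ≠ 0`. Away from `1/2`, by the symmetry `θ ↦ 1 - θ`
it suffices to take `θ ≤ 1/4`, where concavity of `sin` gives `sin (πθ) ≥ 4θ sin (π/4)`,
i.e. `sin² (πθ) ≥ 8θ²`, and then `8θ² (1/θ² + 1/(1-θ)²) > 8` is immediate.
-/

open Real

lemma two_mul_sqrt_two_mul_le_sin_pi_mul {θ : ℝ} (h0 : 0 ≤ θ) (h1 : θ ≤ 1 / 4) :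
    2 * √2 * θ ≤ sin (π * θ) := by
  have hπ := pi_pos
  have hchord := strictConcaveOn_sin_Icc.concaveOn.2
    (⟨by positivity, by linarith⟩ : π / 4 ∈ Set.Icc 0 π) (⟨le_rfl, hπ.le⟩ : (0 : ℝ) ∈ Set.Icc 0 π)
    (by positivity : 0 ≤ 4 * θ) (by linarith : 0 ≤ 1 - 4 * θ) (by ring)
  simp only [smul_eq_mul, sin_zero, mul_zero, add_zero, sin_pi_div_four] at hchord
  calc 2 * √2 * θ = 4 * θ * (√2 / 2) := by ring
    _ ≤ sin (4 * θ * (π / 4)) := hchord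
    _ = sin (π * θ) := by ring_nf

lemma eight_lt_sin_sq_mul_of_le_quarter {θ : ℝ} (h0 : 0 < θ) (h1 : θ ≤ 1 / 4) :
    8 < sin (π * θ) ^ 2 * (1 / θ ^ 2 + 1 / (1 - θ) ^ 2) := by
  have hsin : 8 * θ ^ 2 ≤ sin (π * θ) ^ 2 := by
    have h := pow_le_pow_left₀ (by positivity) (two_mul_sqrt_two_mul_le_sin_pi_mul h0.le h1) 2
    rw [mul_pow, mul_pow, sq_sqrt zero_le_two] at h
    linarith
  have h1θ : 0 < 1 - θ := by linarith
  calc (8 : ℝ) < 8 + 8 * (θ / (1 - θ)) ^ 2 := lt_add_of_pos_right _ (by positivity)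
    _ = 8 * θ ^ 2 * (1 / θ ^ 2 + 1 / (1 - θ) ^ 2) := by field_simp
    _ ≤ sin (π * θ) ^ 2 * (1 / θ ^ 2 + 1 / (1 - θ) ^ 2) := by gcongr

lemma one_sub_five_mul_sq_le_cos_pi_mul (x : ℝ) : 1 - 5 * x ^ 2 ≤ cos (π * x) := by
  have hπ : π ^ 2 < 10 := by nlinarith [pi_lt_d2, pi_pos]
  have := one_sub_sq_div_two_le_cos (x := π * x)
  nlinarith [sq_nonneg x]

lemma sq_one_sub_four_mul_lt {u : ℝ} (h0 : 0 < u) (h1 : u ≤ 1 / 16) :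
    (1 - 4 * u) ^ 2 < (1 - 5 * u) ^ 2 * (1 + 4 * u) := by
  -- the difference is `u (2 - 31u + 100u²)`
  nlinarith [mul_pos h0 h0, mul_pos (mul_pos h0 h0) h0]

lemma sq_one_sub_four_mul_sq_lt_cos_sq {x : ℝ} (h0 : x ≠ 0) (h1 : x ^ 2 ≤ 1 / 16) :
    (1 - 4 * x ^ 2) ^ 2 < cos (π * x) ^ 2 * (1 + 4 * x ^ 2) := by
  calc (1 - 4 * x ^ 2) ^ 2 < (1 - 5 * x ^ 2) ^ 2 * (1 + 4 * x ^ 2) :=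
        sq_one_sub_four_mul_lt (by positivity) h1
    _ ≤ cos (π * x) ^ 2 * (1 + 4 * x ^ 2) := by
        gcongr
        · linarith
        · exact one_sub_five_mul_sq_le_cos_pi_mul x

lemma eight_lt_sin_sq_mul_of_abs_sub_half_le {θ : ℝ} (hne : θ ≠ 1 / 2)
    (h : |θ - 1 / 2| ≤ 1 / 4) :
    8 < sin (π * θ) ^ 2 * (1 / θ ^ 2 + 1 / (1 - θ) ^ 2) := by
  obtain ⟨x, rfl⟩ : ∃ x, θ = 1 / 2 + x := ⟨θ - 1 / 2, by ring⟩
  rw [add_sub_cancel_left] at h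
  obtain ⟨hx_lower, hx_upper⟩ := abs_le.1 h
  have hx0 : x ≠ 0 := by rintro rfl; simp at hne
  have hx2 : x ^ 2 ≤ 1 / 16 := by nlinarith
  have hden : 0 < 1 - 4 * x ^ 2 := by linarith
  have hsin : sin (π * (1 / 2 + x)) = cos (π * x) := by
    rw [mul_add, mul_one_div, add_comm, sin_add_pi_div_two]
  have hsum : 1 / (1 / 2 + x) ^ 2 + 1 / (1 - (1 / 2 + x)) ^ 2
      = 8 * (1 + 4 * x ^ 2) / (1 - 4 * x ^ 2) ^ 2 := by
    have h1 : 1 / 2 + x ≠ 0 := by linarith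
    have h2 : 1 - (1 / 2 + x) ≠ 0 := by linarith
    rw [div_add_div _ _ (by positivity) (by positivity),
      div_eq_div_iff (by positivity) (pow_pos hden 2).ne']
    ring
  have key := sq_one_sub_four_mul_sq_lt_cos_sq hx0 hx2
  rw [hsin, hsum, mul_div_assoc', lt_div_iff₀ (pow_pos hden 2)]
  linarith

lemma eight_lt_sin_sq_mul {θ : ℝ} (h0 : 0 < θ) (h1 : θ < 1) (hne : θ ≠ 1 / 2) :
    8 < sin (π * θ) ^ 2 * (1 / θ ^ 2 + 1 / (1 - θ) ^ 2) := by
  rcases le_or_gt θ (1 / 4) with hle_quarter | hgt_quarter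
  · exact eight_lt_sin_sq_mul_of_le_quarter h0 hle_quarter
  rcases le_or_gt (3 / 4) θ with hge_three_quarters | hlt_three_quarters
  · have h := eight_lt_sin_sq_mul_of_le_quarter (θ := 1 - θ) (by linarith) (by linarith)
    rwa [mul_sub, mul_one, sin_pi_sub, sub_sub_cancel, add_comm] at h
  · exact eight_lt_sin_sq_mul_of_abs_sub_half_le hne (abs_le.2 ⟨by linarith, by linarith⟩)

theorem sin_sq_sum_ge_eight (θ : ℝ) (h1 : 0 < θ) (h2 : θ < 1) :
    Real.sin (π * θ)^2 * (1/θ^2 + 1/(1-θ)^2) ≥ 8 ∧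
    (Real.sin (π * θ)^2 * (1/θ^2 + 1/(1-θ)^2) = 8 ↔ θ = 1/2) := by
  by_cases hθ : θ = 1 / 2
  · subst hθ
    rw [mul_one_div, sin_pi_div_two]
    norm_num
  · have hlt := eight_lt_sin_sq_mul h1 h2 hθ
    exact ⟨hlt.le, fun h => absurd h hlt.ne', fun h => absurd h hθ⟩
end
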